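/- Reciprocal minors on the Grassmann necklace: for every a ∈ ℤ, writing I→_a = {i_1 ≺_a ⋯ ≺_a i_k} as a subset of {a, …, a+n−1}, one has det(τ→(A)_{i_1}, …, τ→(A)_{i_k}) · det(A_{i_1}, …, A_{i_k}) = 1. -/

import Mathlib

open scoped BigOperators

/-- The columns of `A` are `n`-periodic. -/
def ColPeriodic (k n : ℕ) (A : ℤ → Fin k → ℂ) : Prop :=
  ∀ a : ℤ, A (a + (n : ℤ)) = A a

/-- `A` has rank `k`, i.e. its columns span `ℂ^k`. -/
def FullRank (k : ℕ) (A : ℤ → Fin k → ℂ) : Prop :=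
  Submodule.span ℂ (Set.range A) = ⊤

/-- The Gale (componentwise) partial order on finite subsets of `ℤ` of equal
cardinality: `B ≼ C` iff they have the same cardinality and, for each `i`, the
`i`-th smallest element of `B` is at most the `i`-th smallest element of `C`
(equivalently, the counting condition below). -/
def galeLE (B C : Finset ℤ) : Prop :=
  B.card = C.card ∧
    ∀ t : ℤ, (B.filter fun x => t ≤ x).card ≤ (C.filter fun x => t ≤ x).card

/-- The columns of `A` indexed by `J` form a basis of `ℂ^k`. -/
def IsColBasis (k : ℕ) (A : ℤ → Fin k → ℂ) (J : Finset ℤ) : Prop :=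
  J.card = k ∧ LinearIndependent ℂ (fun j : (J : Set ℤ) => A (j : ℤ)) ∧
    Submodule.span ℂ (A '' (J : Set ℤ)) = ⊤

/-- `I` is the `≼_a`-minimal `k`-element subset of `{a, a+1, …, a+n-1}` whose
columns form a basis of `ℂ^k` (the `a`-minimal basis `I→_a`). -/
def IsMinBasis (k n : ℕ) (A : ℤ → Fin k → ℂ) (a : ℤ) (I : Finset ℤ) : Prop :=
  I ⊆ Finset.Ico a (a + (n : ℤ)) ∧ IsColBasis k A I ∧
    ∀ J : Finset ℤ, J ⊆ Finset.Ico a (a + (n : ℤ)) → IsColBasis k A J → galeLE I J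

/-- `I` is the `≼_{a+1}`-maximal `k`-element subset of `{a-n+1, …, a}` whose
columns form a basis of `ℂ^k` (the `a`-maximal basis `I←_a`).  Note that on
representatives in `{a-n+1, …, a}` the cyclic order `≺_{a+1}` agrees with the
usual order of `ℤ`. -/
def IsMaxBasis (k n : ℕ) (A : ℤ → Fin k → ℂ) (a : ℤ) (I : Finset ℤ) : Prop :=
  I ⊆ Finset.Ioc (a - (n : ℤ)) a ∧ IsColBasis k A I ∧
    ∀ J : Finset ℤ, J ⊆ Finset.Ioc (a - (n : ℤ)) a → IsColBasis k A J → galeLE J I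

/-- The standard symmetric bilinear form `⟨x|y⟩ = ∑ i, x i * y i` on `ℂ^k`. -/
noncomputable def bil (k : ℕ) (x y : Fin k → ℂ) : ℂ := ∑ i, x i * y i

/-- `π` is the bounded affine permutation of `A`:
`π a` is the least `r` with `a ≤ r ≤ a + n` and `A a ∈ span(A (a+1), …, A r)`. -/
def IsBAP (k n : ℕ) (A : ℤ → Fin k → ℂ) (π : ℤ → ℤ) : Prop :=
  ∀ a : ℤ,
    a ≤ π a ∧ π a ≤ a + (n : ℤ) ∧
    A a ∈ Submodule.span ℂ (A '' Set.Ioc a (π a)) ∧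
    ∀ r : ℤ, a ≤ r → r ≤ a + (n : ℤ) →
      A a ∈ Submodule.span ℂ (A '' Set.Ioc a r) → π a ≤ r

/-- `T` is the right twist `τ→(A)`: for each `a`, the column `T a` pairs to `1`
with `A a` and to `0` with the other columns of the `a`-minimal basis. -/
def IsRightTwist (k n : ℕ) (A T : ℤ → Fin k → ℂ) : Prop :=
  ∀ (a : ℤ) (I : Finset ℤ), IsMinBasis k n A a I →
    ∀ b ∈ I, bil k (T a) (A b) = if b = a then 1 else 0

/-- `T` is the left twist `τ←(A)`: for each `a`, the column `T a` pairs to `1`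
with `A a` and to `0` with the other columns of the `a`-maximal basis. -/
def IsLeftTwist (k n : ℕ) (A T : ℤ → Fin k → ℂ) : Prop :=
  ∀ (a : ℤ) (I : Finset ℤ), IsMaxBasis k n A a I →
    ∀ b ∈ I, bil k (T a) (A b) = if b = a then 1 else 0

/-- `Δ_I(A)`, where `I = {i 0 < i 1 < ⋯ < i (k-1)}` is given by a strictly
monotone enumeration `i : Fin k → ℤ`: the determinant of the `k×k` matrix with
columns `A (i 0), …, A (i (k-1))`. -/
noncomputable def Delta (k : ℕ) (A : ℤ → Fin k → ℂ) (i : Fin k → ℤ) : ℂ :=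
  Matrix.det (Matrix.of fun r s : Fin k => A (i s) r)

/-! The `a`-minimal basis is unique, by antisymmetry of the Gale order, and is found greedily:
`c ∈ [a, a + n)` belongs to it iff `A c` is not in the span of `A a, …, A (c - 1)`. This
condition only gets weaker when `a` is raised to some `b ≤ c`, so for `b ≤ c` in `I→_a` we
have `c ∈ I→_b` and hence `⟨τ→(A)_b | A_c⟩ = δ_{bc}`. Thus the matrix
`(⟨τ→(A)_{i_r} | A_{i_s}⟩)_{r,s} = τ→(A)_Iᵀ A_I` is lower unitriangular, and its determinant,
the product of the two minors, is `1`. -/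

open Submodule Module

section LinearAlgebra

variable {ι K V : Type*} [Field K] [AddCommGroup V] [Module K V]

theorem linearIndepOn_of_notMem_span_lt [LinearOrder ι] (f : ι → V) (S : Finset ι)
    (h : ∀ c ∈ S, f c ∉ span K (f '' ↑(S.filter (· < c)))) : LinearIndepOn K f ↑S := by
  classical
  induction S using Finset.induction_on_max with
  | empty => simp
  | insert a s hlt ih =>
    have hfilter : (insert a s).filter (· < a) = s := by
      ext x
      simp only [Finset.mem_filter, Finset.mem_insert]
      exact ⟨fun ⟨hx, hxa⟩ => hx.resolve_left hxa.ne, fun hx => ⟨Or.inr hx, hlt x hx⟩⟩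
    rw [Finset.coe_insert]
    refine (ih fun c hc => ?_).insert (hfilter ▸ h a (s.mem_insert_self a))
    refine fun hmem => h c (Finset.mem_insert_of_mem hc) (span_mono (Set.image_mono ?_) hmem)
    exact Finset.coe_subset.mpr (Finset.filter_subset_filter _ (s.subset_insert a))

theorem LinearIndepOn.finrank_span_image_eq_card {f : ι → V} {S : Finset ι}
    (hS : LinearIndepOn K f ↑S) : finrank K (span K (f '' ↑S)) = S.card := by
  rw [Set.image_eq_range, finrank_span_eq_card hS]
  simp

end LinearAlgebra

theorem card_filter_le_add_card_filter_lt (S : Finset ℤ) (t : ℤ) :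
    (S.filter (t ≤ ·)).card + (S.filter (· < t)).card = S.card := by
  simpa [not_le] using S.card_filter_add_card_filter_not (t ≤ ·)

theorem galeLE_of_card_filter_lt_le {B C : Finset ℤ} (hcard : B.card = C.card)
    (h : ∀ t, (C.filter (· < t)).card ≤ (B.filter (· < t)).card) : galeLE B C := by
  refine ⟨hcard, fun t => ?_⟩
  have hB := card_filter_le_add_card_filter_lt B t
  have hC := card_filter_le_add_card_filter_lt C t
  have := h t
  omega

theorem mem_iff_card_filter_lt_card_filter (S : Finset ℤ) (x : ℤ) :
    x ∈ S ↔ (S.filter (x + 1 ≤ ·)).card < (S.filter (x ≤ ·)).card := by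
  have hsplit : S.filter (x ≤ ·) = S.filter (x + 1 ≤ ·) ∪ S.filter (· = x) := by
    ext y
    by_cases hy : y ∈ S <;> simp only [Finset.mem_filter, Finset.mem_union, hy, true_and,
      false_and, or_false]
    omega
  have hdisj : Disjoint (S.filter (x + 1 ≤ ·)) (S.filter (· = x)) := by
    rw [Finset.disjoint_filter]
    intro y _ hy
    omega
  rw [hsplit, Finset.card_union_of_disjoint hdisj, Finset.filter_eq']
  split_ifs with hx <;> simp [hx]

theorem galeLE_antisymm {B C : Finset ℤ} (hBC : galeLE B C) (hCB : galeLE C B) : B = C := by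
  have hcount : ∀ t, (B.filter (t ≤ ·)).card = (C.filter (t ≤ ·)).card :=
    fun t => le_antisymm (hBC.2 t) (hCB.2 t)
  ext x
  rw [mem_iff_card_filter_lt_card_filter, mem_iff_card_filter_lt_card_filter, hcount, hcount]

section Columns

variable {k n : ℕ} {A : ℤ → Fin k → ℂ}

theorem ColPeriodic.span_image_Ico (hn : 0 < n) (hper : ColPeriodic k n A) (b : ℤ) :
    span ℂ (A '' Set.Ico b (b + n)) = span ℂ (Set.range A) := by
  have hn' : (0 : ℤ) < n := by exact_mod_cast hn
  refine le_antisymm (span_mono (Set.image_subset_range _ _)) (span_mono ?_)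
  rintro _ ⟨m, rfl⟩
  exact ⟨toIcoMod hn' b m, toIcoMod_mem_Ico hn' b m, Function.Periodic.sub_zsmul_eq hper _⟩

open Classical in
noncomputable def greedyBasis (A : ℤ → Fin k → ℂ) (n : ℕ) (b : ℤ) : Finset ℤ :=
  (Finset.Ico b (b + n)).filter fun c => A c ∉ span ℂ (A '' Set.Ico b c)

theorem mem_greedyBasis {b c : ℤ} :
    c ∈ greedyBasis A n b ↔ c ∈ Set.Ico b (b + n) ∧ A c ∉ span ℂ (A '' Set.Ico b c) := by
  simp [greedyBasis]

theorem greedyBasis_subset (b : ℤ) : ↑(greedyBasis A n b) ⊆ Set.Ico b (b + n) :=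
  fun _ hc => (mem_greedyBasis.mp hc).1

theorem mem_greedyBasis_of_le {a b c : ℤ} (hc : c ∈ greedyBasis A n a) (hab : a ≤ b)
    (hbc : b ≤ c) : c ∈ greedyBasis A n b := by
  obtain ⟨⟨-, hca⟩, hspan⟩ := mem_greedyBasis.mp hc
  refine mem_greedyBasis.mpr ⟨⟨hbc, by omega⟩, fun hmem => hspan ?_⟩
  exact span_mono (Set.image_mono (Set.Ico_subset_Ico_left hab)) hmem

theorem linearIndepOn_greedyBasis (b : ℤ) : LinearIndepOn ℂ A ↑(greedyBasis A n b) := by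
  refine linearIndepOn_of_notMem_span_lt A _ fun c hc hmem => (mem_greedyBasis.mp hc).2 ?_
  refine span_mono (Set.image_mono fun d hd => ?_) hmem
  rw [Finset.coe_filter] at hd
  exact ⟨(greedyBasis_subset b hd.1).1, hd.2⟩

theorem span_image_greedyBasis_filter (b : ℤ) {c : ℤ} (hc : c ≤ b + n) :
    span ℂ (A '' ↑((greedyBasis A n b).filter (· < c))) = span ℂ (A '' Set.Ico b c) := by
  refine le_antisymm (span_mono (Set.image_mono fun d hd => ?_)) ?_
  · rw [Finset.coe_filter] at hd
    exact ⟨(greedyBasis_subset b hd.1).1, hd.2⟩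
  rcases lt_or_ge c b with hcb | hbc
  · simp [Set.Ico_eq_empty_of_le hcb.le]
  induction c, hbc using Int.leInduction with
  | base => simp
  | succ c hbc ih =>
    have hmono : span ℂ (A '' ↑((greedyBasis A n b).filter (· < c))) ≤
        span ℂ (A '' ↑((greedyBasis A n b).filter (· < c + 1))) :=
      span_mono (Set.image_mono (Finset.coe_subset.mpr
        (Finset.monotone_filter_right _ fun d hd => by omega)))
    specialize ih (by omega)
    refine span_le.mpr ?_
    rintro _ ⟨d, hd, rfl⟩
    obtain hdc | rfl : d < c ∨ d = c := by have := hd.2; omega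
    · exact hmono (ih (subset_span ⟨d, ⟨hd.1, hdc⟩, rfl⟩))
    by_cases hG : d ∈ greedyBasis A n b
    · exact subset_span ⟨d, by simp [hG], rfl⟩
    · exact hmono (ih (not_not.mp fun h => hG (mem_greedyBasis.mpr ⟨⟨hd.1, by omega⟩, h⟩)))

theorem card_greedyBasis_filter (b : ℤ) {t : ℤ} (ht : t ≤ b + n) :
    ((greedyBasis A n b).filter (· < t)).card = finrank ℂ (span ℂ (A '' Set.Ico b t)) := by
  rw [← span_image_greedyBasis_filter b ht, ((linearIndepOn_greedyBasis b).mono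
    (Finset.coe_subset.mpr (Finset.filter_subset _ _))).finrank_span_image_eq_card]

theorem greedyBasis_filter_lt_of_le (b : ℤ) {t : ℤ} (ht : b + n ≤ t) :
    (greedyBasis A n b).filter (· < t) = greedyBasis A n b :=
  Finset.filter_true_of_mem fun _ hc => (greedyBasis_subset b hc).2.trans_le ht

theorem isColBasis_greedyBasis (hn : 0 < n) (hper : ColPeriodic k n A) (hrank : FullRank k A)
    (b : ℤ) : IsColBasis k A (greedyBasis A n b) := by
  have hwindow : span ℂ (A '' Set.Ico b (b + n)) = ⊤ := (hper.span_image_Ico hn b).trans hrank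
  have hfilter := greedyBasis_filter_lt_of_le (A := A) (n := n) b le_rfl
  refine ⟨?_, linearIndepOn_greedyBasis b, ?_⟩
  · rw [← hfilter, card_greedyBasis_filter b le_rfl, hwindow, finrank_top, finrank_fin_fun]
  · rw [← hfilter, span_image_greedyBasis_filter b le_rfl, hwindow]

theorem isMinBasis_greedyBasis (hn : 0 < n) (hper : ColPeriodic k n A) (hrank : FullRank k A)
    (b : ℤ) : IsMinBasis k n A b (greedyBasis A n b) := by
  have hG := isColBasis_greedyBasis hn hper hrank b
  refine ⟨fun c hc => by simpa using greedyBasis_subset b hc, hG, fun J hJ hJbasis =>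
    galeLE_of_card_filter_lt_le (hG.1.trans hJbasis.1.symm) fun t => ?_⟩
  have hJt : ↑(J.filter (· < t)) ⊆ (J : Set ℤ) := Finset.coe_subset.mpr (Finset.filter_subset _ _)
  rcases le_or_gt t (b + n) with ht | ht
  · calc (J.filter (· < t)).card
        = finrank ℂ (span ℂ (A '' ↑(J.filter (· < t)))) :=
          (LinearIndepOn.mono (v := A) hJbasis.2.1 hJt).finrank_span_image_eq_card.symm
      _ ≤ finrank ℂ (span ℂ (A '' Set.Ico b t)) := by
          refine Submodule.finrank_mono (span_mono (Set.image_mono fun d hd => ?_))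
          rw [Finset.coe_filter] at hd
          exact ⟨(Finset.mem_Ico.mp (hJ hd.1)).1, hd.2⟩
      _ = _ := (card_greedyBasis_filter b ht).symm
  · rw [greedyBasis_filter_lt_of_le b ht.le, hG.1, ← hJbasis.1]
    exact Finset.card_filter_le _ _

theorem IsMinBasis.unique {a : ℤ} {I J : Finset ℤ} (hI : IsMinBasis k n A a I)
    (hJ : IsMinBasis k n A a J) : I = J :=
  galeLE_antisymm (hI.2.2 J hJ.1 hJ.2.1) (hJ.2.2 I hI.1 hI.2.1)

theorem IsRightTwist.bil_eq_of_mem_minBasis (hn : 0 < n) (hper : ColPeriodic k n A)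
    (hrank : FullRank k A) {T : ℤ → Fin k → ℂ} (hT : IsRightTwist k n A T) {a : ℤ}
    {I : Finset ℤ} (hI : IsMinBasis k n A a I) {b c : ℤ} (hb : b ∈ I) (hc : c ∈ I)
    (hbc : b ≤ c) : bil k (T b) (A c) = if c = b then 1 else 0 := by
  rw [hI.unique (isMinBasis_greedyBasis hn hper hrank a)] at hb hc
  exact hT b _ (isMinBasis_greedyBasis hn hper hrank b) c
    (mem_greedyBasis_of_le hc (mem_greedyBasis.mp hb).1.1 hbc)

end Columns

theorem Delta_mul_Delta {k : ℕ} (T A : ℤ → Fin k → ℂ) (i : Fin k → ℤ) :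
    Delta k T i * Delta k A i = (Matrix.of fun r s => bil k (T (i r)) (A (i s))).det := by
  rw [Delta, Delta, ← Matrix.det_transpose, ← Matrix.det_mul]
  rfl

theorem Delta_mul_Delta_eq_one {k : ℕ} {T A : ℤ → Fin k → ℂ} {i : Fin k → ℤ}
    (h : ∀ r s, r ≤ s → bil k (T (i r)) (A (i s)) = if s = r then 1 else 0) :
    Delta k T i * Delta k A i = 1 := by
  rw [Delta_mul_Delta, Matrix.det_of_isLowerTriangular]
  · simp [h]
  · intro r s (hrs : r < s)
    simp [h r s hrs.le, hrs.ne']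

/-- reciprocal minors on the Grassmann necklace: for every
`a`, writing `I→_a = {i 0 ≺_a ⋯ ≺_a i (k-1)}` as a subset of `{a, …, a+n-1}`
(on which `≺_a` is the usual order of `ℤ`), one has
`det(τ→(A)_{i 0}, …, τ→(A)_{i (k-1)}) · det(A_{i 0}, …, A_{i (k-1)}) = 1`. -/
theorem twist_necklace_minor_reciprocal
    (k n : ℕ) (hk : 1 ≤ k) (hkn : k ≤ n)
    (A : ℤ → Fin k → ℂ) (hper : ColPeriodic k n A) (hrank : FullRank k A)
    (T : ℤ → Fin k → ℂ) (hT : IsRightTwist k n A T)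
    (a : ℤ) (Ia : Finset ℤ) (hIa : IsMinBasis k n A a Ia)
    (i : Fin k → ℤ) (hi : StrictMono i)
    (himg : Finset.image i Finset.univ = Ia) :
    Delta k T i * Delta k A i = 1 := by
  have hn : 0 < n := Nat.lt_of_lt_of_le hk hkn
  have hmem : ∀ s, i s ∈ Ia := fun s => himg ▸ Finset.mem_image_of_mem i (Finset.mem_univ s)
  refine Delta_mul_Delta_eq_one fun r s hrs => ?_
  simp only [hT.bil_eq_of_mem_minBasis hn hper hrank hIa (hmem r) (hmem s) (hi.monotone hrs),
    hi.injective.eq_iff]
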